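/- Let F̃ : ℝ³ \ {0} → ℝ be smooth and positively homogeneous of degree N > 1, let x ∈ S² with F̃(x) = 0 and ∇F̃(x) ≠ 0. Then the geodesic curvature of the curve {F̃ = 0} ∩ S² at x, with respect to the normal ∇F̃/|∇F̃|, equals det(Hess F̃(x)) / ((N−1)² |∇F̃(x)|³). -/

import Mathlib

open Matrix

/-- The gradient (vector of partial derivatives) of `F` at `x`. -/
noncomputable def grad3 (F : (Fin 3 → ℝ) → ℝ) (x : Fin 3 → ℝ) : Fin 3 → ℝ :=
  fun i => fderiv ℝ F x (Pi.single i 1)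

/-- The Hessian matrix of second partial derivatives of `F` at `x`. -/
noncomputable def hess3 (F : (Fin 3 → ℝ) → ℝ) (x : Fin 3 → ℝ) : Matrix (Fin 3) (Fin 3) ℝ :=
  Matrix.of fun i j => fderiv ℝ (fun y => grad3 F y j) x (Pi.single i 1)

/-- The Euclidean norm of a vector of `ℝ³`. -/
noncomputable def norm3 (u : Fin 3 → ℝ) : ℝ := Real.sqrt (u ⬝ᵥ u)

lemma clm_eq_sum (L : (Fin 3 → ℝ) →L[ℝ] ℝ) (u : Fin 3 → ℝ) :
    L u = ∑ i, u i * L (Pi.single i 1) := by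
  have h : u = ∑ i, u i • (Pi.single i 1 : Fin 3 → ℝ) := by
    ext j
    simp [Finset.sum_apply, Pi.single_apply]
  conv_lhs => rw [h]
  rw [map_sum]
  simp [smul_eq_mul]

lemma entry_MHMt (M H : Matrix (Fin 3) (Fin 3) ℝ) (i j : Fin 3) :
    (M * H * Mᵀ) i j = M i ⬝ᵥ H.mulVec (M j) := by
  simp [Matrix.mul_apply, Matrix.mulVec, dotProduct, Finset.mul_sum, Finset.sum_mul]
  rw [Finset.sum_comm]
  congr 1; ext a; congr 1; ext b; ring

lemma entry_MMt (M : Matrix (Fin 3) (Fin 3) ℝ) (i j : Fin 3) :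
    (M * Mᵀ) i j = M i ⬝ᵥ M j := by
  simp [Matrix.mul_apply, dotProduct]

lemma key_identity (H : Matrix (Fin 3) (Fin 3) ℝ) (hH : H.IsSymm) (x : Fin 3 → ℝ)
    (hx : x ⬝ᵥ x = 1) (h0 : x ⬝ᵥ H.mulVec x = 0) (hne : H.mulVec x ≠ 0) :
    (crossProduct x (H.mulVec x)) ⬝ᵥ H.mulVec (crossProduct x (H.mulVec x)) = - H.det := by
  have hsym : ∀ u v : Fin 3 → ℝ, u ⬝ᵥ H.mulVec v = v ⬝ᵥ H.mulVec u := by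
    intro u v
    rw [Matrix.dotProduct_mulVec, ← Matrix.mulVec_transpose, hH.eq, dotProduct_comm]
  let w : Fin 3 → ℝ := crossProduct x (H.mulVec x)
  have hq0 : (H.mulVec x) ⬝ᵥ (H.mulVec x) ≠ 0 :=
    fun h => hne (dotProduct_self_eq_zero.mp h)
  have hgx : (H.mulVec x) ⬝ᵥ x = 0 := by rw [dotProduct_comm]; exact h0
  have hxw : x ⬝ᵥ w = 0 := dot_self_cross x (H.mulVec x)
  have hgw : (H.mulVec x) ⬝ᵥ w = 0 := dot_cross_self x (H.mulVec x)
  have hwx : w ⬝ᵥ x = 0 := by rw [dotProduct_comm]; exact hxw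
  have hwg : w ⬝ᵥ (H.mulVec x) = 0 := by rw [dotProduct_comm]; exact hgw
  have hww : w ⬝ᵥ w = (H.mulVec x) ⬝ᵥ (H.mulVec x) := by
    show (crossProduct x (H.mulVec x)) ⬝ᵥ (crossProduct x (H.mulVec x)) = _
    rw [cross_dot_cross, hx, h0, hgx]; ring
  set M : Matrix (Fin 3) (Fin 3) ℝ := Matrix.of ![x, H.mulVec x, w] with hM
  have e1 : M 0 = x := rfl
  have e2 : M 1 = H.mulVec x := rfl
  have e3 : M 2 = w := rfl
  have hMMt : (M * Mᵀ).det = ((H.mulVec x) ⬝ᵥ (H.mulVec x)) ^ 2 := by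
    rw [Matrix.det_fin_three]
    simp only [entry_MMt, e1, e2, e3, hx, h0, hgx, hxw, hgw, hwx, hwg, hww]
    ring
  have f01 : x ⬝ᵥ H.mulVec (H.mulVec x) = (H.mulVec x) ⬝ᵥ (H.mulVec x) := by rw [hsym]
  have f02 : x ⬝ᵥ H.mulVec w = 0 := by rw [hsym]; exact hwg
  have f20 : w ⬝ᵥ H.mulVec x = 0 := hwg
  have f21 : w ⬝ᵥ H.mulVec (H.mulVec x) = (H.mulVec x) ⬝ᵥ H.mulVec w := by rw [hsym]
  have hdetE : (M * H * Mᵀ).det =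
      -(((H.mulVec x) ⬝ᵥ (H.mulVec x)) ^ 2 * (w ⬝ᵥ H.mulVec w)) := by
    rw [Matrix.det_fin_three]
    simp only [entry_MHMt, e1, e2, e3, h0, f01, f02, f20, f21]
    ring
  have hdetE' : (M * H * Mᵀ).det = ((H.mulVec x) ⬝ᵥ (H.mulVec x)) ^ 2 * H.det := by
    have h1 : (M * H * Mᵀ).det = (M * Mᵀ).det * H.det := by
      rw [Matrix.det_mul, Matrix.det_mul, Matrix.det_mul, Matrix.det_transpose]; ring
    rw [h1, hMMt]
  have hfin : -(((H.mulVec x) ⬝ᵥ (H.mulVec x)) ^ 2 * (w ⬝ᵥ H.mulVec w))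
      = ((H.mulVec x) ⬝ᵥ (H.mulVec x)) ^ 2 * H.det := by rw [← hdetE, hdetE']
  have hq2 : ((H.mulVec x) ⬝ᵥ (H.mulVec x)) ^ 2 ≠ 0 := pow_ne_zero 2 hq0
  have h2 : ((H.mulVec x) ⬝ᵥ (H.mulVec x)) ^ 2 * (-(w ⬝ᵥ H.mulVec w))
      = ((H.mulVec x) ⬝ᵥ (H.mulVec x)) ^ 2 * H.det := by linarith [hfin]
  have h3 := mul_left_cancel₀ hq2 h2
  show w ⬝ᵥ H.mulVec w = - H.det
  linarith [h3]

open scoped Topology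

set_option maxHeartbeats 1000000 in
theorem geodesic_curvature_homogeneous (F : (Fin 3 → ℝ) → ℝ) (N : ℝ) (hN : 1 < N)
    (hsmooth : ContDiffOn ℝ (⊤ : ℕ∞) F {x : Fin 3 → ℝ | x ≠ 0})
    (hhom : ∀ c : ℝ, 0 < c → ∀ x : Fin 3 → ℝ, x ≠ 0 → F (c • x) = c ^ N * F x)
    (x : Fin 3 → ℝ) (hx : x ⬝ᵥ x = 1) (hFx : F x = 0) (hgrad : grad3 F x ≠ 0)
    -- the unit tangent vector to the curve `{F = 0}` at `x`
    (v : Fin 3 → ℝ) (hv : v = -((norm3 (grad3 F x))⁻¹ • crossProduct x (grad3 F x)))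
    -- the geodesic curvature `k = -⟨∇ᵥ n, v⟩`, where `n = ∇F/|∇F|`
    (k : ℝ)
    (hk : k = -(fderiv ℝ (fun y : Fin 3 → ℝ => (norm3 (grad3 F y))⁻¹ • grad3 F y) x v ⬝ᵥ v)) :
    k = (hess3 F x).det / ((N - 1) ^ 2 * norm3 (grad3 F x) ^ 3) := by
  have hxne : x ≠ 0 := by
    intro h; rw [h] at hx; simp [dotProduct] at hx
  have hopen : IsOpen {y : Fin 3 → ℝ | y ≠ 0} := isOpen_compl_singleton
  have hF : ∀ y : Fin 3 → ℝ, y ≠ 0 → ContDiffAt ℝ (⊤ : ℕ∞) F y := fun y hy =>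
    hsmooth.contDiffAt (hopen.mem_nhds hy)
  have hFd : ∀ y : Fin 3 → ℝ, y ≠ 0 → HasFDerivAt F (fderiv ℝ F y) y := fun y hy =>
    ((hF y hy).differentiableAt (by simp)).hasFDerivAt
  set f'' := fderiv ℝ (fderiv ℝ F) x with hf''def
  have hdF : HasFDerivAt (fderiv ℝ F) f'' x := by
    have h : ContDiffAt ℝ 1 (fderiv ℝ F) x := (hF x hxne).fderiv_right (WithTop.coe_le_coe.mpr le_top)
    exact (h.differentiableAt one_ne_zero).hasFDerivAt
  have hgradj : ∀ j : Fin 3, HasFDerivAt (fun y => grad3 F y j)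
      (f''.flip (Pi.single j 1)) x := by
    intro j
    have h := hdF.clm_apply (hasFDerivAt_const (Pi.single j 1 : Fin 3 → ℝ) x)
    simp only [ContinuousLinearMap.comp_zero, zero_add] at h
    exact h
  set Φ : (Fin 3 → ℝ) →L[ℝ] (Fin 3 → ℝ) :=
    ContinuousLinearMap.pi (fun j => f''.flip (Pi.single j 1)) with hΦdef
  have hgradPi : HasFDerivAt (grad3 F) Φ x := hasFDerivAt_pi.mpr hgradj
  have hHess : ∀ i j, hess3 F x i j = f'' (Pi.single i 1) (Pi.single j 1) := by
    intro i j
    show fderiv ℝ (fun y => grad3 F y j) x (Pi.single i 1) = _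
    rw [(hgradj j).fderiv]
    rfl
  have hsymm : ∀ u w : Fin 3 → ℝ, f'' u w = f'' w u := by
    intro u w
    exact (hF x hxne).isSymmSndFDerivAt (by simp; exact WithTop.coe_le_coe.mpr (le_top : (2 : ℕ∞) ≤ ⊤)) u w
  -- homogeneity of the gradient
  have hgradhom : ∀ c : ℝ, 0 < c → ∀ y : Fin 3 → ℝ, y ≠ 0 →
      ∀ j, grad3 F (c • y) j = c ^ (N - 1) * grad3 F y j := by
    intro c hc y hy j
    have hcy : c • y ≠ 0 := smul_ne_zero (ne_of_gt hc) hy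
    have hinner : HasFDerivAt (fun z : Fin 3 → ℝ => c • z)
        (c • ContinuousLinearMap.id ℝ (Fin 3 → ℝ)) y :=
      (c • ContinuousLinearMap.id ℝ (Fin 3 → ℝ)).hasFDerivAt
    have h1 : HasFDerivAt (fun z => F (c • z))
        ((fderiv ℝ F (c • y)).comp (c • ContinuousLinearMap.id ℝ (Fin 3 → ℝ))) y :=
      (hFd (c • y) hcy).comp y hinner
    have h2 : HasFDerivAt (fun z => c ^ N * F z) ((c ^ N) • fderiv ℝ F y) y :=
      (hFd y hy).const_mul (c ^ N)
    have heq : (fun z => F (c • z)) =ᶠ[𝓝 y] fun z => c ^ N * F z := by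
      filter_upwards [hopen.mem_nhds hy] with z hz
      exact hhom c hc z hz
    have h1' : HasFDerivAt (fun z => c ^ N * F z)
        ((fderiv ℝ F (c • y)).comp (c • ContinuousLinearMap.id ℝ (Fin 3 → ℝ))) y :=
      h1.congr_of_eventuallyEq heq.symm
    have huniq := h1'.unique h2
    have happ := congrFun (congrArg DFunLike.coe huniq) (Pi.single j 1)
    simp only [ContinuousLinearMap.comp_apply, ContinuousLinearMap.smul_apply,
      ContinuousLinearMap.id_apply, _root_.map_smul, smul_eq_mul] at happ
    -- happ : c * fderiv F (c•y) (e j) = c^N * fderiv F y (e j)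
    have hcN : c ^ N = c ^ (N - 1) * c := by
      rw [← Real.rpow_add_one (ne_of_gt hc) (N - 1)]; ring_nf
    show fderiv ℝ F (c • y) (Pi.single j 1) = c ^ (N - 1) * fderiv ℝ F y (Pi.single j 1)
    have hc0 : c ≠ 0 := ne_of_gt hc
    apply mul_left_cancel₀ hc0
    rw [happ, hcN]
    ring
  -- Euler identity for F
  have hsm1 : HasDerivAt (fun c : ℝ => c • x) x 1 := by
    simpa using (hasDerivAt_id (1 : ℝ)).smul_const x
  have heuler1 : x ⬝ᵥ grad3 F x = 0 := by
    have hL : HasDerivAt (fun c : ℝ => F (c • x)) (fderiv ℝ F x x) 1 := by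
      have hFx1 : HasFDerivAt F (fderiv ℝ F x) ((1 : ℝ) • x) := by
        rw [one_smul]; exact hFd x hxne
      exact hFx1.comp_hasDerivAt 1 hsm1
    have hR : HasDerivAt (fun c : ℝ => c ^ N * F x) (N * F x) 1 := by
      have h := (Real.hasDerivAt_rpow_const (x := (1 : ℝ)) (p := N)
        (Or.inl one_ne_zero)).mul_const (F x)
      simpa using h
    have heq : (fun c : ℝ => c ^ N * F x) =ᶠ[𝓝 (1 : ℝ)] fun c => F (c • x) := by
      filter_upwards [eventually_gt_nhds zero_lt_one] with c hc
      exact (hhom c hc x hxne).symm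
    have := (hL.congr_of_eventuallyEq heq).unique hR
    have hsum : fderiv ℝ F x x = x ⬝ᵥ grad3 F x := by
      rw [clm_eq_sum]; rfl
    rw [hsum] at this
    rw [this, hFx]; ring
  -- Euler identity for the gradient
  have heuler2 : ∀ j, f'' x (Pi.single j 1) = (N - 1) * grad3 F x j := by
    intro j
    have hL : HasDerivAt (fun c : ℝ => grad3 F (c • x) j) (f'' x (Pi.single j 1)) 1 := by
      have hj : HasFDerivAt (fun y => grad3 F y j) (f''.flip (Pi.single j 1)) ((1 : ℝ) • x) := by
        rw [one_smul]; exact hgradj j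
      have h := hj.comp_hasDerivAt 1 hsm1
      exact h
    have hR : HasDerivAt (fun c : ℝ => c ^ (N - 1) * grad3 F x j)
        ((N - 1) * grad3 F x j) 1 := by
      have h := (Real.hasDerivAt_rpow_const (x := (1 : ℝ)) (p := N - 1)
        (Or.inl one_ne_zero)).mul_const (grad3 F x j)
      simpa using h
    have heq : (fun c : ℝ => c ^ (N - 1) * grad3 F x j) =ᶠ[𝓝 (1 : ℝ)]
        fun c => grad3 F (c • x) j := by
      filter_upwards [eventually_gt_nhds zero_lt_one] with c hc
      exact (hgradhom c hc x hxne j).symm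
    exact (hL.congr_of_eventuallyEq heq).unique hR
  set H := hess3 F x with hHdef
  have hsymH : H.IsSymm := by
    ext i j
    show H j i = H i j
    rw [hHess, hHess, hsymm]
  have hN1 : N - 1 ≠ 0 := sub_ne_zero.mpr (ne_of_gt hN)
  have hmulVecH : H.mulVec x = (N - 1) • grad3 F x := by
    rw [← hsymH.eq, Matrix.mulVec_transpose]
    ext j
    have h1 : Matrix.vecMul x H j = ∑ i, x i * H i j := rfl
    have h2 : f'' x (Pi.single j 1) = ∑ i, x i * H i j := by
      have h3 : f'' x (Pi.single j 1) = f''.flip (Pi.single j 1) x := rfl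
      rw [h3, clm_eq_sum]
      congr 1; ext i
      rw [hHess]
      rfl
    rw [h1, ← h2, heuler2 j]
    simp [smul_eq_mul]
  -- differentiability of the normalizing factor
  have hdotd : DifferentiableAt ℝ (fun y => grad3 F y ⬝ᵥ grad3 F y) x := by
    simp only [dotProduct]
    apply DifferentiableAt.fun_sum
    intro i _
    exact ((hgradj i).differentiableAt).mul ((hgradj i).differentiableAt)
  have hpos : 0 < grad3 F x ⬝ᵥ grad3 F x := by
    have h1 : grad3 F x ⬝ᵥ grad3 F x ≠ 0 :=
      fun h => hgrad (dotProduct_self_eq_zero.mp h)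
    have h2 : 0 ≤ grad3 F x ⬝ᵥ grad3 F x :=
      Finset.sum_nonneg fun i _ => mul_self_nonneg _
    exact h2.lt_of_ne' h1
  have hspos : 0 < norm3 (grad3 F x) := Real.sqrt_pos.mpr hpos
  have hs0 : norm3 (grad3 F x) ≠ 0 := ne_of_gt hspos
  have hnormd : DifferentiableAt ℝ (fun y => norm3 (grad3 F y)) x := by
    show DifferentiableAt ℝ (fun y => Real.sqrt (grad3 F y ⬝ᵥ grad3 F y)) x
    exact ((Real.hasDerivAt_sqrt (ne_of_gt hpos)).differentiableAt).comp x hdotd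
  have hρ : DifferentiableAt ℝ (fun y => (norm3 (grad3 F y))⁻¹) x := hnormd.inv hs0
  have hprod : HasFDerivAt (fun y => (norm3 (grad3 F y))⁻¹ • grad3 F y)
      ((norm3 (grad3 F x))⁻¹ • Φ +
        (fderiv ℝ (fun y => (norm3 (grad3 F y))⁻¹) x).smulRight (grad3 F x)) x :=
    hρ.hasFDerivAt.smul hgradPi
  set s := norm3 (grad3 F x) with hsdef
  set G := grad3 F x with hGdef
  set ρ' := fderiv ℝ (fun y => (norm3 (grad3 F y))⁻¹) x with hρ'def
  -- the derivative applied to v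
  have hfder : fderiv ℝ (fun y : Fin 3 → ℝ => (norm3 (grad3 F y))⁻¹ • grad3 F y) x v
      = s⁻¹ • (Φ v) + (ρ' v) • G := by
    rw [hprod.fderiv]
    simp [ContinuousLinearMap.add_apply, ContinuousLinearMap.smul_apply,
      ContinuousLinearMap.smulRight_apply]
  have hΦv : Φ v = Matrix.vecMul v H := by
    ext j
    show f''.flip (Pi.single j 1) v = _
    rw [clm_eq_sum]
    have : Matrix.vecMul v H j = ∑ i, v i * H i j := rfl
    rw [this]
    congr 1; ext i
    rw [hHess]
    rfl
  have hGv : G ⬝ᵥ v = 0 := by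
    rw [hv, dotProduct_neg, dotProduct_smul]
    rw [dot_cross_self]
    simp
  have hk2 : k = -(s⁻¹ * (v ⬝ᵥ H.mulVec v)) := by
    rw [hk, hfder, add_dotProduct, smul_dotProduct, smul_dotProduct,
      hGv, hΦv, ← Matrix.dotProduct_mulVec]
    simp [smul_eq_mul]
  -- the key algebraic computation
  have hxHx : x ⬝ᵥ H.mulVec x = 0 := by
    rw [hmulVecH, dotProduct_smul, heuler1]
    simp
  have hHxne : H.mulVec x ≠ 0 := by
    rw [hmulVecH]
    exact smul_ne_zero hN1 hgrad
  have hkey := key_identity H hsymH x hx hxHx hHxne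
  have hcross : crossProduct x (H.mulVec x) = (N - 1) • crossProduct x G := by
    rw [hmulVecH, LinearMap.map_smul]
  have hBsmul : ∀ (a : ℝ) (u : Fin 3 → ℝ),
      (a • u) ⬝ᵥ H.mulVec (a • u) = a ^ 2 * (u ⬝ᵥ H.mulVec u) := by
    intro a u
    rw [Matrix.mulVec_smul, smul_dotProduct, dotProduct_smul, smul_smul,
      smul_eq_mul]
    ring
  have hB0 : (crossProduct x G) ⬝ᵥ H.mulVec (crossProduct x G) = -H.det / (N - 1) ^ 2 := by
    rw [hcross, hBsmul] at hkey
    field_simp at hkey ⊢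
    linarith [hkey]
  have hBv : v ⬝ᵥ H.mulVec v = s⁻¹ ^ 2 * (-H.det / (N - 1) ^ 2) := by
    rw [hv]
    have : -((s⁻¹ : ℝ) • crossProduct x G) = (-(s⁻¹) : ℝ) • crossProduct x G := by
      rw [neg_smul]
    rw [this, hBsmul, hB0]
    ring
  rw [hk2, hBv]
  field_simp
  try ring
  try exact Or.inl trivial
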